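/- arXiv:2308.03269 — 2 statements merged into one kernel-verified Lean document; each statement's English description precedes it below -/
import Mathlib

section
/- Let z₁, z₂, z₃ ∈ ℂ satisfy 0 ≤ Re(z_i), Im(z_i) ≤ 1, and let r₁, r₂ ∈ ℂ with |r₁|, |r₂| ≤ R for some R > 0. Define φ₁ = |r₁||z₁||z₂| cos(arg r₁ + arg z₁ − arg z₂) and φ₂ = |r₂||z₂||z₃| cos(arg r₂ + arg z₂ − arg z₃). If arg r₁ + arg z₁ − arg z₂ = 0 and arg r₂ + arg z₂ − arg z₃ = 0, then with r := r₁·r₂/R and φ_r := |r||z₁||z₃| cos(arg r + arg z₁ − arg z₃), we have (φ₁/(2R))·(φ₂/(2R)) ≤ φ_r/(2R). -/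
/-! Once both body phases vanish, the phase of `r = r₁ r₂ / R` vanishes too, because `arg` is
additive modulo `2π` and dividing by `R > 0` does not change it. All cosines are then `1`, and the
inequality reduces to `‖r₁‖ ‖r₂‖ ‖z₁‖ ‖z₃‖ ‖z₂‖² / (4R²) ≤ ‖r₁‖ ‖r₂‖ ‖z₁‖ ‖z₃‖ / (2R²)`, that is,
to `‖z₂‖² ≤ 2` for `z₂` in the unit square. -/

namespace Complex

theorem sq_norm_le_two_of_abs_re_le_one_of_abs_im_le_one {z : ℂ} (hre : |z.re| ≤ 1)
    (him : |z.im| ≤ 1) : ‖z‖ ^ 2 ≤ 2 := by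
  rw [Complex.sq_norm, normSq_apply]
  nlinarith [abs_mul_abs_self z.re, abs_mul_abs_self z.im, abs_nonneg z.re, abs_nonneg z.im]

theorem arg_div_ofReal {r : ℝ} (hr : 0 < r) (x : ℂ) : arg (x / r) = arg x := by
  rw [div_eq_mul_inv, ← ofReal_inv, arg_mul_real (inv_pos.mpr hr)]

theorem cos_arg_mul_add {x y : ℂ} (hx : x ≠ 0) (hy : y ≠ 0) (θ : ℝ) :
    Real.cos (arg (x * y) + θ) = Real.cos (arg x + arg y + θ) := by
  simp only [← Real.Angle.cos_coe, Real.Angle.coe_add, arg_mul_coe_angle hx hy]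

end Complex

theorem mul_div_two_mul_le_of_sq_le_two {R a b x y w : ℝ} (hR : 0 < R) (ha : 0 ≤ a) (hb : 0 ≤ b)
    (hx : 0 ≤ x) (hw : 0 ≤ w) (hy : y ^ 2 ≤ 2) :
    a * x * y / (2 * R) * (b * y * w / (2 * R)) ≤ a * b / R * x * w / (2 * R) := by
  have habxw : 0 ≤ a * b * x * w := by positivity
  calc a * x * y / (2 * R) * (b * y * w / (2 * R))
      = a * b * x * w * y ^ 2 / (4 * R ^ 2) := by field_simp; ring
    _ ≤ a * b * x * w * 2 / (4 * R ^ 2) := by gcongr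
    _ = a * b / R * x * w / (2 * R) := by field_simp; ring

theorem composition_prob_step_general (R : ℝ) (hR : 0 < R) (z₁ z₂ z₃ r₁ r₂ : ℂ)
    (hr₁ : r₁ ≠ 0) (hr₂ : r₂ ≠ 0)
    (hb₂ : 0 ≤ z₂.re ∧ z₂.re ≤ 1 ∧ 0 ≤ z₂.im ∧ z₂.im ≤ 1)
    (hph₁ : Complex.arg r₁ + Complex.arg z₁ - Complex.arg z₂ = 0)
    (hph₂ : Complex.arg r₂ + Complex.arg z₂ - Complex.arg z₃ = 0) :
    (‖r₁‖ * ‖z₁‖ * ‖z₂‖ *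
        Real.cos (Complex.arg r₁ + Complex.arg z₁ - Complex.arg z₂) / (2 * R)) *
      (‖r₂‖ * ‖z₂‖ * ‖z₃‖ *
        Real.cos (Complex.arg r₂ + Complex.arg z₂ - Complex.arg z₃) / (2 * R)) ≤
    (‖r₁ * r₂ / (R : ℂ)‖ * ‖z₁‖ * ‖z₃‖ *
        Real.cos (Complex.arg (r₁ * r₂ / (R : ℂ)) + Complex.arg z₁ - Complex.arg z₃)) / (2 * R) := by
  obtain ⟨hre₀, hre₁, him₀, him₁⟩ := hb₂
  have hz₂ : ‖z₂‖ ^ 2 ≤ 2 := Complex.sq_norm_le_two_of_abs_re_le_one_of_abs_im_le_one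
    (abs_le.mpr ⟨by linarith, hre₁⟩) (abs_le.mpr ⟨by linarith, him₁⟩)
  have hcos : Real.cos (Complex.arg (r₁ * r₂ / R) + Complex.arg z₁ - Complex.arg z₃) = 1 := by
    rw [Complex.arg_div_ofReal hR, add_sub_assoc, Complex.cos_arg_mul_add hr₁ hr₂,
      show Complex.arg r₁ + Complex.arg r₂ + (Complex.arg z₁ - Complex.arg z₃) = 0 by linarith,
      Real.cos_zero]
  have hnorm : ‖r₁ * r₂ / (R : ℂ)‖ = ‖r₁‖ * ‖r₂‖ / R := by
    rw [norm_div, norm_mul, Complex.norm_real, Real.norm_of_nonneg hR.le]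
  rw [hph₁, hph₂, hcos, hnorm, Real.cos_zero, mul_one, mul_one, mul_one]
  exact mul_div_two_mul_le_of_sq_le_two hR (norm_nonneg _) (norm_nonneg _) (norm_nonneg _)
    (norm_nonneg _) hz₂

theorem composition_prob_step (R : ℝ) (hR : 0 < R) (z₁ z₂ z₃ r₁ r₂ : ℂ)
    (hz₁ : z₁ ≠ 0) (hz₂ : z₂ ≠ 0) (hz₃ : z₃ ≠ 0) (hr₁ : r₁ ≠ 0) (hr₂ : r₂ ≠ 0)
    (hb₁ : 0 ≤ z₁.re ∧ z₁.re ≤ 1 ∧ 0 ≤ z₁.im ∧ z₁.im ≤ 1)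
    (hb₂ : 0 ≤ z₂.re ∧ z₂.re ≤ 1 ∧ 0 ≤ z₂.im ∧ z₂.im ≤ 1)
    (hb₃ : 0 ≤ z₃.re ∧ z₃.re ≤ 1 ∧ 0 ≤ z₃.im ∧ z₃.im ≤ 1)
    (hra : ‖r₁‖ ≤ R) (hrb : ‖r₂‖ ≤ R)
    (hph₁ : Complex.arg r₁ + Complex.arg z₁ - Complex.arg z₂ = 0)
    (hph₂ : Complex.arg r₂ + Complex.arg z₂ - Complex.arg z₃ = 0) :
    (‖r₁‖ * ‖z₁‖ * ‖z₂‖ *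
        Real.cos (Complex.arg r₁ + Complex.arg z₁ - Complex.arg z₂) / (2 * R)) *
      (‖r₂‖ * ‖z₂‖ * ‖z₃‖ *
        Real.cos (Complex.arg r₂ + Complex.arg z₂ - Complex.arg z₃) / (2 * R)) ≤
    (‖r₁ * r₂ / (R : ℂ)‖ * ‖z₁‖ * ‖z₃‖ *
        Real.cos (Complex.arg (r₁ * r₂ / (R : ℂ)) + Complex.arg z₁ - Complex.arg z₃)) / (2 * R) :=
  composition_prob_step_general R hR z₁ z₂ z₃ r₁ r₂ hr₁ hr₂ hb₂ hph₁ hph₂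
end

section
/- Let k ≥ 1, and let z₀, z₁, …, z_k ∈ ℂ satisfy |z_i| ≤ √2 for all i (coming from the box constraint 0 ≤ Re, Im ≤ 1), and let r₁, …, r_k ∈ ℂ with 0 < |r_i| ≤ R. Define φ_i = |r_i||z_{i−1}||z_i| cos(arg r_i + arg z_{i−1} − arg z_i), and assume arg r_i + arg z_{i−1} − arg z_i = 0 for all i. Define r̂ := R·∏_{i=1}^k (r_i/R), so |r̂| ≤ R, and φ̂ := |r̂||z₀||z_k| cos(arg r̂ + arg z₀ − arg z_k). Then ∏_{i=1}^k (φ_i/(2R)) ≤ φ̂/(2R). -/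
/-! With zero phases every cosine on the left is `1`. Up to a positive real factor `r̂` is `∏ rᵢ`,
so modulo `2π` its argument is `∑ arg rᵢ`, which the phase conditions telescope to
`arg z_k - arg z₀`; hence the cosine on the right is `1` as well. After cancelling `∏ |rᵢ| / R`,
the left side is `|z₀| |z_k| / 2` times `∏_{0<i<k} |zᵢ|² / 2 ≤ 1`. -/

open Finset

theorem Fin.sum_univ_succ_sub_castSucc {G : Type*} [AddCommGroup G] {n : ℕ}
    (f : Fin (n + 1) → G) : ∑ i : Fin n, (f i.succ - f i.castSucc) = f (Fin.last n) - f 0 := by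
  induction n with
  | zero => simp
  | succ n ih =>
    rw [Fin.sum_univ_castSucc]
    simp only [Fin.succ_castSucc, Fin.succ_last]
    have := ih (fun i => f i.castSucc)
    simp only [Fin.castSucc_zero] at this
    rw [this]; abel

theorem Complex.arg_prod_coe_angle {ι : Type*} (s : Finset ι) (f : ι → ℂ)
    (h : ∀ i ∈ s, f i ≠ 0) :
    (Complex.arg (∏ i ∈ s, f i) : Real.Angle) = ∑ i ∈ s, (Complex.arg (f i) : Real.Angle) := by
  classical
  induction s using Finset.cons_induction with
  | empty => simp
  | cons a s ha ih =>
    rw [prod_cons, sum_cons, Complex.arg_mul_coe_angle (h a (mem_cons_self a s))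
        (prod_ne_zero_iff.2 fun i hi => h i (mem_cons_of_mem hi)),
      ih fun i hi => h i (mem_cons_of_mem hi)]

theorem Complex.arg_ofReal_mul_prod_div_ofReal_coe_angle {ι : Type*} [Fintype ι] {R : ℝ}
    (hR : 0 < R) {r : ι → ℂ} (hr : ∀ i, r i ≠ 0) :
    (Complex.arg (R * ∏ i, r i / R) : Real.Angle) = ∑ i, (Complex.arg (r i) : Real.Angle) := by
  have hR' : (R : ℂ) ≠ 0 := by exact_mod_cast hR.ne'
  rw [Complex.arg_real_mul _ hR, Complex.arg_prod_coe_angle _ _ fun i _ => div_ne_zero (hr i) hR']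
  refine sum_congr rfl fun i _ => ?_
  rw [div_eq_mul_inv, ← Complex.ofReal_inv, Complex.arg_mul_real (inv_pos.2 hR)]

theorem cos_arg_ofReal_mul_prod_div_ofReal_eq_one {n : ℕ} {R : ℝ} (hR : 0 < R)
    {z : Fin (n + 1) → ℂ} {r : Fin n → ℂ} (hr : ∀ i, r i ≠ 0)
    (hph : ∀ i, Complex.arg (r i) + Complex.arg (z i.castSucc) - Complex.arg (z i.succ) = 0) :
    Real.cos (Complex.arg ((R : ℂ) * ∏ i, r i / R) + Complex.arg (z 0)
      - Complex.arg (z (Fin.last n))) = 1 := by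
  have hsum : ∑ i, (Complex.arg (r i) : Real.Angle)
      = ∑ i : Fin n, ((Complex.arg (z i.succ) : Real.Angle) - Complex.arg (z i.castSucc)) :=
    sum_congr rfl fun i _ => by rw [← Real.Angle.coe_sub, eq_sub_of_add_eq (sub_eq_zero.1 (hph i))]
  rw [← Real.Angle.cos_coe, Real.Angle.coe_sub, Real.Angle.coe_add,
    Complex.arg_ofReal_mul_prod_div_ofReal_coe_angle hR hr, hsum,
    Fin.sum_univ_succ_sub_castSucc fun j => (Complex.arg (z j) : Real.Angle)]
  simp

theorem Fin.prod_castSucc_mul_succ_div_le {n : ℕ} {c : ℝ} (hc : 0 < c) {x : Fin (n + 2) → ℝ}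
    (hx₀ : ∀ i, 0 ≤ x i) (hxc : ∀ i, x i ^ 2 ≤ c) :
    ∏ i : Fin (n + 1), x i.castSucc * x i.succ / c ≤ x 0 * x (Fin.last _) / c := by
  induction n with
  | zero => simp
  | succ n ih =>
    have ih' := ih (x := fun i => x i.castSucc) (fun i => hx₀ _) (fun i => hxc _)
    simp only [Fin.castSucc_zero] at ih'
    set y := x (Fin.last (n + 1)).castSucc
    have hy : y * y / c ≤ 1 := by rw [div_le_one hc, ← sq]; exact hxc _
    calc ∏ i : Fin (n + 2), x i.castSucc * x i.succ / c
        = (∏ i : Fin (n + 1), x i.castSucc.castSucc * x i.succ.castSucc / c)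
            * (y * x (Fin.last (n + 2)) / c) := by
          rw [Fin.prod_univ_castSucc]; rfl
      _ ≤ x 0 * y / c * (y * x (Fin.last (n + 2)) / c) := by
          gcongr
          exact div_nonneg (mul_nonneg (hx₀ _) (hx₀ _)) hc.le
      _ = x 0 * x (Fin.last (n + 2)) / c * (y * y / c) := by ring
      _ ≤ x 0 * x (Fin.last (n + 2)) / c :=
          mul_le_of_le_one_right (div_nonneg (mul_nonneg (hx₀ _) (hx₀ _)) hc.le) hy

theorem horn_rule_core_general (k : ℕ) (hk : 1 ≤ k) (R : ℝ) (hR : 0 < R)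
    (z : Fin (k + 1) → ℂ) (r : Fin k → ℂ)
    (hz : ∀ i, ‖z i‖ ≤ Real.sqrt 2)
    (hrpos : ∀ i, 0 < ‖r i‖)
    (hph : ∀ i : Fin k,
      Complex.arg (r i) + Complex.arg (z i.castSucc) - Complex.arg (z i.succ) = 0) :
    (∏ i : Fin k,
        ‖r i‖ * ‖z i.castSucc‖ * ‖z i.succ‖ *
          Real.cos (Complex.arg (r i) + Complex.arg (z i.castSucc) - Complex.arg (z i.succ)) /
        (2 * R)) ≤
    (‖(R : ℂ) * ∏ i : Fin k, (r i / (R : ℂ))‖ * ‖z 0‖ *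
        ‖z (Fin.last k)‖ *
        Real.cos (Complex.arg ((R : ℂ) * ∏ i : Fin k, (r i / (R : ℂ))) +
          Complex.arg (z 0) - Complex.arg (z (Fin.last k)))) / (2 * R) := by
  obtain ⟨m, rfl⟩ : ∃ m, k = m + 1 := ⟨k - 1, by omega⟩
  have hnorm : ‖(R : ℂ) * ∏ i, r i / R‖ = R * ∏ i, (‖r i‖ / R) := by
    simp [norm_prod, abs_of_pos hR]
  have hz2 : ∀ i, ‖z i‖ ^ 2 ≤ 2 := fun i => (Real.le_sqrt (norm_nonneg _) zero_le_two).1 (hz i)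
  simp only [hph, Real.cos_zero, mul_one,
    cos_arg_ofReal_mul_prod_div_ofReal_eq_one hR (fun i => norm_pos_iff.1 (hrpos i)) hph, hnorm]
  calc ∏ i, ‖r i‖ * ‖z i.castSucc‖ * ‖z i.succ‖ / (2 * R)
      = (∏ i, ‖r i‖ / R) * ∏ i : Fin (m + 1), ‖z i.castSucc‖ * ‖z i.succ‖ / 2 := by
        rw [← prod_mul_distrib]
        refine prod_congr rfl fun i _ => ?_
        field_simp
    _ ≤ (∏ i, ‖r i‖ / R) * (‖z 0‖ * ‖z (Fin.last _)‖ / 2) := by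
        gcongr
        exact Fin.prod_castSucc_mul_succ_div_le two_pos (fun i => norm_nonneg _) hz2
    _ = R * (∏ i, ‖r i‖ / R) * ‖z 0‖ * ‖z (Fin.last _)‖ / (2 * R) := by
        field_simp

theorem horn_rule_core (k : ℕ) (hk : 1 ≤ k) (R : ℝ) (hR : 0 < R)
    (z : Fin (k + 1) → ℂ) (r : Fin k → ℂ)
    (hz : ∀ i, ‖z i‖ ≤ Real.sqrt 2)
    (hrpos : ∀ i, 0 < ‖r i‖) (hrR : ∀ i, ‖r i‖ ≤ R)
    (hph : ∀ i : Fin k,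
      Complex.arg (r i) + Complex.arg (z i.castSucc) - Complex.arg (z i.succ) = 0) :
    (∏ i : Fin k,
        ‖r i‖ * ‖z i.castSucc‖ * ‖z i.succ‖ *
          Real.cos (Complex.arg (r i) + Complex.arg (z i.castSucc) - Complex.arg (z i.succ)) /
        (2 * R)) ≤
    (‖(R : ℂ) * ∏ i : Fin k, (r i / (R : ℂ))‖ * ‖z 0‖ *
        ‖z (Fin.last k)‖ *
        Real.cos (Complex.arg ((R : ℂ) * ∏ i : Fin k, (r i / (R : ℂ))) +
          Complex.arg (z 0) - Complex.arg (z (Fin.last k)))) / (2 * R) :=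
  horn_rule_core_general k hk R hR z r hz hrpos hph
end
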